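/- arXiv:1501.00793 — 4 statements merged into one kernel-verified Lean document; each statement's English description precedes it below -/
import Mathlib

section
/- Let λ₁,λ₂,λ₃,λ₄ and λ̄₁,λ̄₂,λ̄₃,λ̄₄ be positive reals and let a,b,c,d,e,f be real numbers. For t ≥ 0 define A(t)=λ₁(1 + 3λ₂t/(λ₁λ₄))^{1/3}, B(t)=λ₂(1 + 3λ₂t/(λ₁λ₄))^{-1/3}, C(t)=λ₃, D(t)=λ₄(1 + 3λ₂t/(λ₁λ₄))^{1/3}, and define Ā,B̄,C̄,D̄ by the same formulas with λ̄ᵢ in place of λᵢ. Then the quantity ((Ā+b²B̄+c²C̄-A)/A)² + ((B-B̄)/B)² + ((C-C̄-a²B̄)/C)² + ((d²Ā+e²B̄+f²C̄+D̄-D)/D)² + 2(bB̄)²/(AB) + 2(bB̄a+cC̄)²/(AC) + 2(dĀ+bB̄e+cC̄f)²/(AD) + 2(aB̄)²/(BC) + 2(eB̄)²/(BD) + 2(aB̄e+fC̄)²/(CD) tends to 0 as t → ∞ if and only if d = 0, λ̄₃ = λ₃, and there exists k > 0 with λ̄₁ = kλ₁, λ̄₂ = λ₂/k and λ̄₄ =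 kλ₄; in particular the quasi-convergence class [g] is exactly a 1-parameter family. -/
/-!
Write `p = (1 + 3λ₂t/(λ₁λ₄))^{1/3}` and `q = (1 + 3λ̄₂t/(λ̄₁λ̄₄))^{1/3}`, so that `A, B, C, D` are
`λ₁p, λ₂/p, λ₃, λ₄p` and likewise for the barred flow with `q`. Both `p` and `q` tend to infinity
while `q/p` tends to `s = ((λ̄₂/(λ̄₁λ̄₄))/(λ₂/(λ₁λ₄)))^{1/3} > 0`. After dividing through, the
quantity is a continuous function of `(q/p, p/q, 1/p, 1/q)`, so it converges to a sum of squares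
evaluated at `(s, 1/s, 0, 0)`. That limit vanishes exactly when `d = 0`, `λ̄₃ = λ₃` and the
remaining parameters are rescaled by `k = 1/s`; conversely such a rescaling forces `s = 1/k`.
-/

open Filter Real Topology

/-- The squared norm `|ḡ - g|²_g`, where `g = diag(A, B, C, D)` and `ḡ = diag(Ab, Bb, Cb, Db)`
in their own frames, and the frames are related by the transition matrix with entries `a, …, f`. -/
noncomputable def a4NormSqDiff (a b c d e f A B C D Ab Bb Cb Db : ℝ) : ℝ :=
  ((Ab + b ^ 2 * Bb + c ^ 2 * Cb - A) / A) ^ 2 +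
  ((B - Bb) / B) ^ 2 +
  ((C - Cb - a ^ 2 * Bb) / C) ^ 2 +
  ((d ^ 2 * Ab + e ^ 2 * Bb + f ^ 2 * Cb + Db - D) / D) ^ 2 +
  2 * (b * Bb) ^ 2 / (A * B) +
  2 * (b * Bb * a + c * Cb) ^ 2 / (A * C) +
  2 * (d * Ab + b * Bb * e + c * Cb * f) ^ 2 / (A * D) +
  2 * (a * Bb) ^ 2 / (B * C) +
  2 * (e * Bb) ^ 2 / (B * D) +
  2 * (a * Bb * e + f * Cb) ^ 2 / (C * D)

section Rescaled

variable (l1 l2 l3 l4 m1 m2 m3 m4 a b c d e f : ℝ)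

/-- `a4NormSqDiff` for the metrics `(l1 p, l2/p, l3, l4 p)` and `(m1 q, m2/q, m3, m4 q)`,
written in the variables `x = q/p`, `y = p/q`, `u = 1/p`, `w = 1/q`. -/
noncomputable def a4NormSqDiffRescaled (x y u w : ℝ) : ℝ :=
  (m1 / l1 * x + b ^ 2 * m2 / l1 * (u * w) + c ^ 2 * m3 / l1 * u - 1) ^ 2 +
  (1 - m2 / l2 * y) ^ 2 +
  ((l3 - m3 - a ^ 2 * m2 * w) / l3) ^ 2 +
  (d ^ 2 * m1 / l4 * x + e ^ 2 * m2 / l4 * (u * w) + f ^ 2 * m3 / l4 * u + m4 / l4 * x - 1) ^ 2 +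
  2 * b ^ 2 * m2 ^ 2 * w ^ 2 / (l1 * l2) +
  2 * (b * m2 * a * w + c * m3) ^ 2 * u / (l1 * l3) +
  2 * (d * m1 * x + b * m2 * e * (u * w) + c * m3 * f * u) ^ 2 / (l1 * l4) +
  2 * a ^ 2 * m2 ^ 2 * (y * w) / (l2 * l3) +
  2 * e ^ 2 * m2 ^ 2 * w ^ 2 / (l2 * l4) +
  2 * (a * m2 * e * w + f * m3) ^ 2 * u / (l3 * l4)

theorem continuous_a4NormSqDiffRescaled :
    Continuous fun v : ℝ × ℝ × ℝ × ℝ =>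
      a4NormSqDiffRescaled l1 l2 l3 l4 m1 m2 m3 m4 a b c d e f v.1 v.2.1 v.2.2.1 v.2.2.2 := by
  unfold a4NormSqDiffRescaled
  fun_prop

variable {l1 l2 l3 l4}

theorem a4NormSqDiff_eq_rescaled (hl1 : l1 ≠ 0) (hl2 : l2 ≠ 0) (hl4 : l4 ≠ 0) {p q : ℝ}
    (hp : p ≠ 0) (hq : q ≠ 0) :
    a4NormSqDiff a b c d e f (l1 * p) (l2 / p) l3 (l4 * p) (m1 * q) (m2 / q) m3 (m4 * q) =
      a4NormSqDiffRescaled l1 l2 l3 l4 m1 m2 m3 m4 a b c d e f (q / p) (p / q) p⁻¹ q⁻¹ := by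
  unfold a4NormSqDiff a4NormSqDiffRescaled
  field_simp

theorem tendsto_a4NormSqDiff (hl1 : l1 ≠ 0) (hl2 : l2 ≠ 0) (hl4 : l4 ≠ 0) {p q : ℝ → ℝ} {s : ℝ}
    (hp : Tendsto p atTop atTop) (hq : Tendsto q atTop atTop)
    (hqp : Tendsto (fun t => q t / p t) atTop (𝓝 s)) (hs : s ≠ 0) :
    Tendsto (fun t => a4NormSqDiff a b c d e f (l1 * p t) (l2 / p t) l3 (l4 * p t)
        (m1 * q t) (m2 / q t) m3 (m4 * q t)) atTop
      (𝓝 (a4NormSqDiffRescaled l1 l2 l3 l4 m1 m2 m3 m4 a b c d e f s s⁻¹ 0 0)) := by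
  have hpq : Tendsto (fun t => p t / q t) atTop (𝓝 s⁻¹) := by
    simpa only [inv_div] using hqp.inv₀ hs
  refine ((continuous_a4NormSqDiffRescaled l1 l2 l3 l4 m1 m2 m3 m4 a b c d e f).tendsto _).comp
    (hqp.prodMk_nhds (hpq.prodMk_nhds (hp.inv_tendsto_atTop.prodMk_nhds
      hq.inv_tendsto_atTop))) |>.congr' ?_
  filter_upwards [hp.eventually_ne_atTop 0, hq.eventually_ne_atTop 0] with t hpt hqt
  exact (a4NormSqDiff_eq_rescaled m1 m2 m3 m4 a b c d e f hl1 hl2 hl4 hpt hqt).symm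

theorem a4NormSqDiffRescaled_limit_eq_zero_iff (hl1 : 0 < l1) (hl2 : l2 ≠ 0) (hl3 : l3 ≠ 0)
    (hl4 : 0 < l4) {s : ℝ} (hs : s ≠ 0) :
    a4NormSqDiffRescaled l1 l2 l3 l4 m1 m2 m3 m4 a b c d e f s s⁻¹ 0 0 = 0 ↔
      d = 0 ∧ m3 = l3 ∧ m1 = s⁻¹ * l1 ∧ m2 = l2 / s⁻¹ ∧ m4 = s⁻¹ * l4 := by
  simp only [a4NormSqDiffRescaled, mul_zero, add_zero, zero_pow two_ne_zero, sub_zero, zero_div]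
  constructor
  · intro h
    simp (disch := positivity) only [add_eq_zero_iff_of_nonneg, pow_eq_zero_iff two_ne_zero,
      div_eq_zero_iff, mul_eq_zero, sub_eq_zero, hl3, hs, hl1.ne', hl4.ne', two_ne_zero,
      or_false, false_or] at h
    obtain ⟨⟨⟨⟨h1, h2⟩, rfl⟩, h4⟩, rfl | rfl⟩ := h
    · refine ⟨rfl, rfl, ?_, ?_, ?_⟩ <;> field_simp at * <;> linarith
    · simp at h1
  · rintro ⟨rfl, rfl, rfl, rfl, rfl⟩
    field_simp
    ring

end Rescaled

theorem tendsto_one_add_mul_rpow_atTop {α r : ℝ} (hα : 0 < α) (hr : 0 < r) :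
    Tendsto (fun t => (1 + α * t) ^ r) atTop atTop :=
  (tendsto_rpow_atTop hr).comp
    (tendsto_atTop_add_const_left _ 1 (tendsto_id.const_mul_atTop hα))

theorem tendsto_one_add_mul_div_one_add_mul {α β : ℝ} (hα : α ≠ 0) :
    Tendsto (fun t => (1 + β * t) / (1 + α * t)) atTop (𝓝 (β / α)) := by
  have h : Tendsto (fun t : ℝ => (t⁻¹ + β) / (t⁻¹ + α)) atTop (𝓝 ((0 + β) / (0 + α))) :=
    (tendsto_inv_atTop_zero.add_const β).div (tendsto_inv_atTop_zero.add_const α)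
      (by rwa [zero_add])
  rw [zero_add, zero_add] at h
  refine h.congr' ?_
  filter_upwards [eventually_gt_atTop 0] with t ht
  have hinv : ∀ γ, t⁻¹ + γ = (1 + γ * t) / t := fun γ => by field_simp
  rw [hinv, hinv, div_div_div_cancel_right₀ ht.ne']

theorem tendsto_one_add_mul_rpow_div {α β : ℝ} (hα : 0 < α) (hβ : 0 < β) (r : ℝ) :
    Tendsto (fun t => (1 + β * t) ^ r / (1 + α * t) ^ r) atTop (𝓝 ((β / α) ^ r)) := by
  refine ((tendsto_one_add_mul_div_one_add_mul hα.ne').rpow_const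
    (.inl (div_pos hβ hα).ne')).congr' ?_
  filter_upwards [eventually_ge_atTop 0] with t ht
  exact div_rpow (by positivity) (by positivity) r

theorem rpow_third_of_rescaled_ratio {l1 l2 l4 k : ℝ} (hl1 : l1 ≠ 0) (hl2 : l2 ≠ 0)
    (hl4 : l4 ≠ 0) (hk : 0 < k) :
    (3 * (l2 / k) / (k * l1 * (k * l4)) / (3 * l2 / (l1 * l4))) ^ ((1 : ℝ) / 3) = k⁻¹ := by
  have hcube : 3 * (l2 / k) / (k * l1 * (k * l4)) / (3 * l2 / (l1 * l4)) = k⁻¹ ^ 3 := by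
    field_simp
  rw [hcube, show (1 : ℝ) / 3 = ((3 : ℕ) : ℝ)⁻¹ by norm_num,
    pow_rpow_inv_natCast (by positivity) three_ne_zero]

theorem stmt_4_general (l1 l2 l3 l4 m1 m2 m3 m4 a b c d e f : ℝ)
    (hl1 : 0 < l1) (hl2 : 0 < l2) (hl3 : 0 < l3) (hl4 : 0 < l4)
    (hm1 : 0 < m1) (hm2 : 0 < m2) (hm4 : 0 < m4)
    (A B C D Ab Bb Cb Db : ℝ → ℝ)
    (hA : ∀ t : ℝ, A t = l1 * (1 + 3 * l2 * t / (l1 * l4)) ^ ((1:ℝ)/3))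
    (hB : ∀ t : ℝ, B t = l2 * (1 + 3 * l2 * t / (l1 * l4)) ^ (-(1:ℝ)/3))
    (hC : ∀ t : ℝ, C t = l3)
    (hD : ∀ t : ℝ, D t = l4 * (1 + 3 * l2 * t / (l1 * l4)) ^ ((1:ℝ)/3))
    (hAb : ∀ t : ℝ, Ab t = m1 * (1 + 3 * m2 * t / (m1 * m4)) ^ ((1:ℝ)/3))
    (hBb : ∀ t : ℝ, Bb t = m2 * (1 + 3 * m2 * t / (m1 * m4)) ^ (-(1:ℝ)/3))
    (hCb : ∀ t : ℝ, Cb t = m3)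
    (hDb : ∀ t : ℝ, Db t = m4 * (1 + 3 * m2 * t / (m1 * m4)) ^ ((1:ℝ)/3)) :
    Filter.Tendsto (fun t : ℝ =>
        ((Ab t + b ^ 2 * Bb t + c ^ 2 * Cb t - A t) / A t) ^ 2 +
        ((B t - Bb t) / B t) ^ 2 +
        ((C t - Cb t - a ^ 2 * Bb t) / C t) ^ 2 +
        ((d ^ 2 * Ab t + e ^ 2 * Bb t + f ^ 2 * Cb t + Db t - D t) / D t) ^ 2 +
        2 * (b * Bb t) ^ 2 / (A t * B t) +
        2 * (b * Bb t * a + c * Cb t) ^ 2 / (A t * C t) +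
        2 * (d * Ab t + b * Bb t * e + c * Cb t * f) ^ 2 / (A t * D t) +
        2 * (a * Bb t) ^ 2 / (B t * C t) +
        2 * (e * Bb t) ^ 2 / (B t * D t) +
        2 * (a * Bb t * e + f * Cb t) ^ 2 / (C t * D t))
      Filter.atTop (nhds 0) ↔
      (d = 0 ∧ m3 = l3 ∧ ∃ k : ℝ, 0 < k ∧ m1 = k * l1 ∧ m2 = l2 / k ∧ m4 = k * l4) := by
  have hlin : ∀ x y z t : ℝ, 3 * y * t / (x * z) = 3 * y / (x * z) * t := fun _ _ _ _ =>
    mul_div_right_comm _ _ _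
  simp only [hlin] at hA hB hD hAb hBb hDb
  set α := 3 * l2 / (l1 * l4)
  set β := 3 * m2 / (m1 * m4)
  have hα : 0 < α := by positivity
  have hβ : 0 < β := by positivity
  set s := (β / α) ^ ((1 : ℝ) / 3) with hs_def
  have hs : 0 < s := by positivity
  have hlim := tendsto_a4NormSqDiff (l3 := l3) m1 m2 m3 m4 a b c d e f hl1.ne' hl2.ne' hl4.ne'
    (tendsto_one_add_mul_rpow_atTop hα (by norm_num))
    (tendsto_one_add_mul_rpow_atTop hβ (by norm_num)) (tendsto_one_add_mul_rpow_div hα hβ _) hs.ne'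
  replace hlim : Tendsto (fun t => a4NormSqDiff a b c d e f (A t) (B t) (C t) (D t)
      (Ab t) (Bb t) (Cb t) (Db t)) atTop
      (𝓝 (a4NormSqDiffRescaled l1 l2 l3 l4 m1 m2 m3 m4 a b c d e f s s⁻¹ 0 0)) := by
    refine hlim.congr' ?_
    filter_upwards [eventually_ge_atTop 0] with t ht
    have hneg : ∀ {x κ : ℝ}, 0 < κ →
        x * (1 + κ * t) ^ (-(1 : ℝ) / 3) = x / (1 + κ * t) ^ ((1 : ℝ) / 3) :=
      fun hκ => by rw [neg_div, rpow_neg (by positivity), ← div_eq_mul_inv]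
    simp only [hA, hB, hC, hD, hAb, hBb, hCb, hDb, hneg hα, hneg hβ]
  have hzero := a4NormSqDiffRescaled_limit_eq_zero_iff m1 m2 m3 m4 a b c d e f hl1 hl2.ne'
    hl3.ne' hl4 hs.ne'
  constructor
  · intro h
    obtain ⟨hd, h3, h1, h2, h4⟩ := hzero.1 (tendsto_nhds_unique hlim h)
    exact ⟨hd, h3, s⁻¹, inv_pos.2 hs, h1, h2, h4⟩
  · rintro ⟨hd, h3, k, hk, h1, h2, h4⟩
    obtain rfl : s⁻¹ = k := by
      rw [hs_def]
      simp only [α, β, h1, h2, h4]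
      rw [rpow_third_of_rescaled_ratio hl1.ne' hl2.ne' hl4.ne' hk, inv_inv]
    rwa [hzero.2 ⟨hd, h3, h1, h2, h4⟩] at hlim

/-- class A4, different frames: quasi-convergence holds iff
`d = 0`, `λ̄₃ = λ₃` and `(λ̄₁,λ̄₂,λ̄₄) = (kλ₁, λ₂/k, kλ₄)` for some `k > 0`;
`[g]` is a 1-parameter family. -/
theorem stmt_4 (l1 l2 l3 l4 m1 m2 m3 m4 a b c d e f : ℝ)
    (hl1 : 0 < l1) (hl2 : 0 < l2) (hl3 : 0 < l3) (hl4 : 0 < l4)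
    (hm1 : 0 < m1) (hm2 : 0 < m2) (hm3 : 0 < m3) (hm4 : 0 < m4)
    (A B C D Ab Bb Cb Db : ℝ → ℝ)
    (hA : ∀ t : ℝ, A t = l1 * (1 + 3 * l2 * t / (l1 * l4)) ^ ((1:ℝ)/3))
    (hB : ∀ t : ℝ, B t = l2 * (1 + 3 * l2 * t / (l1 * l4)) ^ (-(1:ℝ)/3))
    (hC : ∀ t : ℝ, C t = l3)
    (hD : ∀ t : ℝ, D t = l4 * (1 + 3 * l2 * t / (l1 * l4)) ^ ((1:ℝ)/3))
    (hAb : ∀ t : ℝ, Ab t = m1 * (1 + 3 * m2 * t / (m1 * m4)) ^ ((1:ℝ)/3))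
    (hBb : ∀ t : ℝ, Bb t = m2 * (1 + 3 * m2 * t / (m1 * m4)) ^ (-(1:ℝ)/3))
    (hCb : ∀ t : ℝ, Cb t = m3)
    (hDb : ∀ t : ℝ, Db t = m4 * (1 + 3 * m2 * t / (m1 * m4)) ^ ((1:ℝ)/3)) :
    Filter.Tendsto (fun t : ℝ =>
        ((Ab t + b ^ 2 * Bb t + c ^ 2 * Cb t - A t) / A t) ^ 2 +
        ((B t - Bb t) / B t) ^ 2 +
        ((C t - Cb t - a ^ 2 * Bb t) / C t) ^ 2 +
        ((d ^ 2 * Ab t + e ^ 2 * Bb t + f ^ 2 * Cb t + Db t - D t) / D t) ^ 2 +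
        2 * (b * Bb t) ^ 2 / (A t * B t) +
        2 * (b * Bb t * a + c * Cb t) ^ 2 / (A t * C t) +
        2 * (d * Ab t + b * Bb t * e + c * Cb t * f) ^ 2 / (A t * D t) +
        2 * (a * Bb t) ^ 2 / (B t * C t) +
        2 * (e * Bb t) ^ 2 / (B t * D t) +
        2 * (a * Bb t * e + f * Cb t) ^ 2 / (C t * D t))
      Filter.atTop (nhds 0) ↔
      (d = 0 ∧ m3 = l3 ∧ ∃ k : ℝ, 0 < k ∧ m1 = k * l1 ∧ m2 = l2 / k ∧ m4 = k * l4) :=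
  stmt_4_general l1 l2 l3 l4 m1 m2 m3 m4 a b c d e f hl1 hl2 hl3 hl4 hm1 hm2 hm4 A B C D Ab Bb Cb Db
    hA hB hC hD hAb hBb hCb hDb
end

section
/- Let λ₁,λ₂,λ₃,λ₄ and λ̄₁,λ̄₂,λ̄₃,λ̄₄ be positive reals. Suppose A,B,C,D : [0,∞) → (0,∞) are differentiable and satisfy dA/dt = B/D, dB/dt = -B²/(AD), dC/dt = 0, dD/dt = 3 + B/A with A(0)=λ₁, B(0)=λ₂, C(0)=λ₃, D(0)=λ₄ (so that A(t)B(t) = λ₁λ₂ for all t), and suppose (as holds for these solutions) that A(t) → ∞ and D(t) → ∞ as t → ∞. Let Ā,B̄,C̄,D̄ satisfy the same ODE system with initial data λ̄₁,λ̄₂,λ̄₃,λ̄₄ and with Ā(t) → ∞, D̄(t) → ∞. Then ((A-Ā)/A)² + ((B-B̄)/B)² + ((C-C̄)/C)² + ((D-D̄)/D)² tends to 0 as t → ∞ if and only if λ̄₁λ̄₂ = λ₁λ₂ and λ̄₃ = λ₃ (with λ̄₄ arbitrary); in particular the quasi-convergence class [g]_α is exactly a 2-parameter family. -/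
/-!
Each summand tends to `0` iff the corresponding ratio `Ā/A`, `B̄/B`, `C̄/C`, `D̄/D` tends to
`1`. `C` and `C̄` are constant, and `(Ā/A)(B̄/B) = λ̄₁λ̄₂/(λ₁λ₂)` because `AB` is conserved,
which forces both conditions. Conversely, `D' = 3 + B/A → 3` for both solutions, so
`D ~ D̄` by an `∞/∞` L'Hôpital rule; and `(A²)' = 2AB/D = 2k/D` with `k = AB`, so when the
products agree the same rule gives `Ā² ~ A²`, whence `Ā/A → 1` and `B̄/B = A/Ā → 1`.
-/

open Filter Set Asymptotics Topology

section Calculus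

variable {E : Type*} [NormedAddCommGroup E] [NormedSpace ℝ E]

theorem eq_of_hasDerivWithinAt_zero_Ici {f : ℝ → E} {a : ℝ}
    (hf : ∀ t ∈ Ici a, HasDerivWithinAt f 0 (Ici a) t) {t : ℝ} (ht : a ≤ t) : f t = f a :=
  constant_of_has_deriv_right_zero
    (fun x hx => (hf x hx.1).continuousWithinAt.mono Icc_subset_Ici_self)
    (fun x hx => (hf x hx.1).mono (Ici_subset_Ici.2 hx.1)) t ⟨ht, le_rfl⟩

theorem eventually_hasDerivAt_of_hasDerivWithinAt_Ici {f f' : ℝ → E} {a : ℝ}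
    (hf : ∀ t ∈ Ici a, HasDerivWithinAt f (f' t) (Ici a) t) :
    ∀ᶠ t in atTop, HasDerivAt f (f' t) t :=
  (eventually_gt_atTop a).mono fun t ht => (hf t ht.le).hasDerivAt (Ici_mem_nhds ht)

theorem isLittleO_atTop_of_hasDerivAt {f f' : ℝ → E} {g g' : ℝ → ℝ}
    (hf : ∀ᶠ t in atTop, HasDerivAt f (f' t) t) (hg : ∀ᶠ t in atTop, HasDerivAt g (g' t) t)
    (hg' : ∀ᶠ t in atTop, 0 ≤ g' t) (hg_top : Tendsto g atTop atTop) (h : f' =o[atTop] g') :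
    f =o[atTop] g := by
  refine IsLittleO.of_bound fun c hc => ?_
  obtain ⟨T, hT⟩ := eventually_atTop.1 (hf.and (hg.and (hg'.and (h.bound (half_pos hc)))))
  have hfence : ∀ x, T ≤ x → ‖f x‖ ≤ ‖f T‖ + c / 2 * (g x - g T) := by
    intro x hx
    have hB : ∀ y, T ≤ y →
        HasDerivAt (fun y => ‖f T‖ + c / 2 * (g y - g T)) (c / 2 * g' y) y := fun y hy =>
      (((hT y hy).2.1.sub_const (g T)).const_mul (c / 2)).const_add ‖f T‖
    refine image_norm_le_of_norm_deriv_right_le_deriv_boundary' (a := T) (b := x)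
      (fun y hy => (hT y hy.1).1.continuousAt.continuousWithinAt)
      (fun y hy => (hT y hy.1).1.hasDerivWithinAt) (by simp)
      (fun y hy => (hB y hy.1).continuousAt.continuousWithinAt)
      (fun y hy => (hB y hy.1).hasDerivWithinAt) (fun y hy => ?_) ⟨hx, le_rfl⟩
    obtain ⟨-, -, hg'y, hbound⟩ := hT y hy.1
    rwa [Real.norm_of_nonneg hg'y] at hbound
  filter_upwards [eventually_ge_atTop T, hg_top.eventually_ge_atTop 0,
    hg_top.eventually_ge_atTop ((‖f T‖ - c / 2 * g T) / (c / 2))] with x hxT hx_nonneg hx_large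
  rw [div_le_iff₀ (half_pos hc)] at hx_large
  rw [Real.norm_of_nonneg hx_nonneg]
  linarith [hfence x hxT]

theorem isEquivalent_atTop_of_hasDerivAt {f f' g g' : ℝ → ℝ}
    (hf : ∀ᶠ t in atTop, HasDerivAt f (f' t) t) (hg : ∀ᶠ t in atTop, HasDerivAt g (g' t) t)
    (hg' : ∀ᶠ t in atTop, 0 ≤ g' t) (hg_top : Tendsto g atTop atTop) (h : f' ~[atTop] g') :
    f ~[atTop] g :=
  isLittleO_atTop_of_hasDerivAt ((hf.and hg).mono fun _ ht => ht.1.sub ht.2) hg hg' hg_top h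

end Calculus

section Limits

variable {α : Type*} {l : Filter α}

theorem tendsto_add_nhds_zero_iff_of_nonneg {f g : α → ℝ} (hf : ∀ t, 0 ≤ f t)
    (hg : ∀ t, 0 ≤ g t) :
    Tendsto (fun t => f t + g t) l (𝓝 0) ↔ Tendsto f l (𝓝 0) ∧ Tendsto g l (𝓝 0) :=
  ⟨fun h => ⟨squeeze_zero hf (fun t => le_add_of_nonneg_right (hg t)) h,
      squeeze_zero hg (fun t => le_add_of_nonneg_left (hf t)) h⟩,
    fun h => by simpa using h.1.add h.2⟩

theorem tendsto_sq_nhds_zero_iff {f : α → ℝ} :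
    Tendsto (fun t => f t ^ 2) l (𝓝 0) ↔ Tendsto f l (𝓝 0) := by
  refine ⟨fun h => ?_, fun h => by simpa using h.pow 2⟩
  rw [tendsto_zero_iff_abs_tendsto_zero]
  simpa [Real.sqrt_sq_eq_abs, Function.comp_def] using h.sqrt

theorem tendsto_sub_div_self_nhds_zero_iff {u v : α → ℝ} (hu : ∀ᶠ t in l, u t ≠ 0) :
    Tendsto (fun t => (u t - v t) / u t) l (𝓝 0) ↔
      Tendsto (fun t => v t / u t) l (𝓝 1) := by
  have h : (fun t => 1 - v t / u t) =ᶠ[l] fun t => (u t - v t) / u t :=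
    hu.mono fun t ht => by field_simp
  rw [← tendsto_congr' h]
  simpa using tendsto_const_sub_iff (1 : ℝ) (c := 1) (f := fun t => v t / u t) (l := l)

end Limits

-- Large-time data of the `A`, `B`, `D` components of an A5 solution; `k` is the conserved `A * B`.
structure IsA5Solution (k : ℝ) (A B D : ℝ → ℝ) : Prop where
  hasDerivAt_A : ∀ᶠ t in atTop, HasDerivAt A (B t / D t) t
  hasDerivAt_D : ∀ᶠ t in atTop, HasDerivAt D (3 + B t / A t) t
  mul_eq : ∀ᶠ t in atTop, A t * B t = k
  tendsto_A : Tendsto A atTop atTop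
  tendsto_D : Tendsto D atTop atTop

namespace IsA5Solution

variable {k k' : ℝ} {A B D A' B' D' : ℝ → ℝ}

theorem of_Ici (hA : ∀ t ∈ Ici (0 : ℝ), HasDerivWithinAt A (B t / D t) (Ici 0) t)
    (hD : ∀ t ∈ Ici (0 : ℝ), HasDerivWithinAt D (3 + B t / A t) (Ici 0) t)
    (hAB : ∀ t ∈ Ici (0 : ℝ), A t * B t = k)
    (hA_top : Tendsto A atTop atTop) (hD_top : Tendsto D atTop atTop) :
    IsA5Solution k A B D where
  hasDerivAt_A := eventually_hasDerivAt_of_hasDerivWithinAt_Ici hA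
  hasDerivAt_D := eventually_hasDerivAt_of_hasDerivWithinAt_Ici hD
  mul_eq := eventually_atTop.2 ⟨0, hAB⟩
  tendsto_A := hA_top
  tendsto_D := hD_top

theorem tendsto_B_div_A (h : IsA5Solution k A B D) :
    Tendsto (fun t => B t / A t) atTop (𝓝 0) := by
  have hsq := tendsto_const_nhds (x := k).div_atTop (h.tendsto_A.atTop_mul_atTop₀ h.tendsto_A)
  refine hsq.congr' ?_
  filter_upwards [h.mul_eq, h.tendsto_A.eventually_gt_atTop 0] with t hk hA
  rw [← hk]
  field_simp

theorem tendsto_deriv_D (h : IsA5Solution k A B D) :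
    Tendsto (fun t => 3 + B t / A t) atTop (𝓝 3) := by
  simpa using h.tendsto_B_div_A.const_add 3

theorem isEquivalent_D (h : IsA5Solution k A B D) (h' : IsA5Solution k' A' B' D') :
    D ~[atTop] D' :=
  isEquivalent_atTop_of_hasDerivAt h.hasDerivAt_D h'.hasDerivAt_D
    (h'.tendsto_deriv_D.eventually (eventually_ge_nhds three_pos)) h'.tendsto_D
    (((isEquivalent_const_iff_tendsto three_ne_zero).2 h.tendsto_deriv_D).trans
      ((isEquivalent_const_iff_tendsto three_ne_zero).2 h'.tendsto_deriv_D).symm)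

theorem tendsto_div_D (h : IsA5Solution k A B D) (h' : IsA5Solution k' A' B' D') :
    Tendsto (fun t => D' t / D t) atTop (𝓝 1) :=
  (isEquivalent_iff_tendsto_one (h.tendsto_D.eventually_ne_atTop 0)).1 (h'.isEquivalent_D h)

theorem hasDerivAt_sq_A (h : IsA5Solution k A B D) :
    ∀ᶠ t in atTop, HasDerivAt (fun s => A s ^ 2) (2 * k / D t) t := by
  filter_upwards [h.hasDerivAt_A, h.mul_eq] with t hA hk
  refine (hA.pow 2).congr_deriv ?_
  rw [← hk]
  ring

theorem isEquivalent_sq_A (h : IsA5Solution k A B D) (h' : IsA5Solution k A' B' D') (hk : 0 ≤ k) :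
    (fun t => A' t ^ 2) ~[atTop] fun t => A t ^ 2 := by
  refine isEquivalent_atTop_of_hasDerivAt h'.hasDerivAt_sq_A h.hasDerivAt_sq_A ?_
    (by simpa [sq] using h.tendsto_A.atTop_mul_atTop₀ h.tendsto_A)
    (IsEquivalent.refl.div (h'.isEquivalent_D h))
  filter_upwards [h.tendsto_D.eventually_gt_atTop 0] with t hD
  positivity

theorem tendsto_div_A (h : IsA5Solution k A B D) (h' : IsA5Solution k A' B' D') (hk : 0 ≤ k) :
    Tendsto (fun t => A' t / A t) atTop (𝓝 1) := by
  have hA := h.tendsto_A.eventually_gt_atTop 0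
  have hsq : Tendsto (fun t => A' t ^ 2 / A t ^ 2) atTop (𝓝 1) :=
    (isEquivalent_iff_tendsto_one (hA.mono fun t ht => by positivity)).1
      (h.isEquivalent_sq_A h' hk)
  have hsqrt : Tendsto (fun t => √(A' t ^ 2 / A t ^ 2)) atTop (𝓝 1) := by
    simpa using hsq.sqrt
  refine hsqrt.congr' ?_
  filter_upwards [hA, h'.tendsto_A.eventually_gt_atTop 0] with t hAt hA't
  rw [← div_pow, Real.sqrt_sq (by positivity)]

theorem tendsto_div_B (h : IsA5Solution k A B D) (h' : IsA5Solution k A' B' D') (hk : 0 < k) :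
    Tendsto (fun t => B' t / B t) atTop (𝓝 1) := by
  have hinv : Tendsto (fun t => (A' t / A t)⁻¹) atTop (𝓝 1) := by
    simpa using (h.tendsto_div_A h' hk.le).inv₀ one_ne_zero
  refine hinv.congr' ?_
  filter_upwards [h.mul_eq, h'.mul_eq, h.tendsto_A.eventually_gt_atTop 0,
    h'.tendsto_A.eventually_gt_atTop 0] with t hAB hAB' hA hA'
  rw [eq_div_of_mul_eq hA.ne' ((mul_comm _ _).trans hAB),
    eq_div_of_mul_eq hA'.ne' ((mul_comm _ _).trans hAB')]
  field_simp

theorem eq_of_tendsto_div (h : IsA5Solution k A B D) (h' : IsA5Solution k' A' B' D') (hk : k ≠ 0)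
    (hA : Tendsto (fun t => A' t / A t) atTop (𝓝 1))
    (hB : Tendsto (fun t => B' t / B t) atTop (𝓝 1)) : k' = k := by
  have hprod : ∀ᶠ t in atTop, A' t / A t * (B' t / B t) = k' / k := by
    filter_upwards [h.mul_eq, h'.mul_eq] with t hAB hAB'
    rw [div_mul_div_comm, hAB, hAB']
  have := tendsto_nhds_unique ((hA.mul hB).congr' hprod) tendsto_const_nhds
  rwa [mul_one, eq_comm, div_eq_one_iff_eq hk] at this

end IsA5Solution

theorem stmt_5_general (l1 l2 l3 m1 m2 m3 : ℝ)
    (hl1 : 0 < l1) (hl2 : 0 < l2) (hl3 : 0 < l3)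
    (A B C D Ab Bb Cb Db : ℝ → ℝ)
    (hA : ∀ t ∈ Set.Ici (0:ℝ), HasDerivWithinAt A (B t / D t) (Set.Ici 0) t)
    (hC : ∀ t ∈ Set.Ici (0:ℝ), HasDerivWithinAt C 0 (Set.Ici 0) t)
    (hD : ∀ t ∈ Set.Ici (0:ℝ), HasDerivWithinAt D (3 + B t / A t) (Set.Ici 0) t)
    (hC0 : C 0 = l3)
    (hAB : ∀ t ∈ Set.Ici (0:ℝ), A t * B t = l1 * l2)
    (hAlim : Filter.Tendsto A Filter.atTop Filter.atTop)
    (hDlim : Filter.Tendsto D Filter.atTop Filter.atTop)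
    (hAb : ∀ t ∈ Set.Ici (0:ℝ), HasDerivWithinAt Ab (Bb t / Db t) (Set.Ici 0) t)
    (hCb : ∀ t ∈ Set.Ici (0:ℝ), HasDerivWithinAt Cb 0 (Set.Ici 0) t)
    (hDb : ∀ t ∈ Set.Ici (0:ℝ), HasDerivWithinAt Db (3 + Bb t / Ab t) (Set.Ici 0) t)
    (hCb0 : Cb 0 = m3)
    (hAbB : ∀ t ∈ Set.Ici (0:ℝ), Ab t * Bb t = m1 * m2)
    (hAblim : Filter.Tendsto Ab Filter.atTop Filter.atTop)
    (hDblim : Filter.Tendsto Db Filter.atTop Filter.atTop) :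
    Filter.Tendsto (fun t : ℝ =>
        ((A t - Ab t) / A t) ^ 2 + ((B t - Bb t) / B t) ^ 2 +
        ((C t - Cb t) / C t) ^ 2 + ((D t - Db t) / D t) ^ 2)
      Filter.atTop (nhds 0) ↔ (m1 * m2 = l1 * l2 ∧ m3 = l3) := by
  have hsol := IsA5Solution.of_Ici hA hD hAB hAlim hDlim
  have hsolb := IsA5Solution.of_Ici hAb hDb hAbB hAblim hDblim
  have hCt : ∀ᶠ t in atTop, C t = l3 := eventually_atTop.2
    ⟨0, fun t ht => (eq_of_hasDerivWithinAt_zero_Ici hC ht).trans hC0⟩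
  have hCbt : ∀ᶠ t in atTop, Cb t = m3 := eventually_atTop.2
    ⟨0, fun t ht => (eq_of_hasDerivWithinAt_zero_Ici hCb ht).trans hCb0⟩
  have hC_iff : Tendsto (fun t => Cb t / C t) atTop (𝓝 1) ↔ m3 = l3 := by
    rw [tendsto_congr' (hCt.and hCbt |>.mono fun t ht => by rw [ht.1, ht.2]),
      tendsto_const_nhds_iff, div_eq_one_iff_eq hl3.ne']
  have hB_ne : ∀ᶠ t in atTop, B t ≠ 0 :=
    hsol.mul_eq.mono fun t ht => right_ne_zero_of_mul (ht ▸ (mul_pos hl1 hl2).ne')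
  simp (disch := intro; positivity) only
    [tendsto_add_nhds_zero_iff_of_nonneg, tendsto_sq_nhds_zero_iff]
  rw [tendsto_sub_div_self_nhds_zero_iff (hsol.tendsto_A.eventually_ne_atTop 0),
    tendsto_sub_div_self_nhds_zero_iff hB_ne,
    tendsto_sub_div_self_nhds_zero_iff (hCt.mono fun t ht => ht ▸ hl3.ne'),
    tendsto_sub_div_self_nhds_zero_iff (hsol.tendsto_D.eventually_ne_atTop 0), hC_iff]
  constructor
  · rintro ⟨⟨⟨hA_div, hB_div⟩, h3⟩, -⟩
    exact ⟨hsol.eq_of_tendsto_div hsolb (by positivity) hA_div hB_div, h3⟩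
  · rintro ⟨hk, h3⟩
    rw [hk] at hsolb
    exact ⟨⟨⟨hsol.tendsto_div_A hsolb (by positivity),
      hsol.tendsto_div_B hsolb (by positivity)⟩, h3⟩, hsol.tendsto_div_D hsolb⟩

/-- class A5: for solutions of the A5 Ricci-flow ODE system,
quasi-convergence in the same frame holds iff `λ̄₁λ̄₂ = λ₁λ₂` and `λ̄₃ = λ₃`;
`[g]_α` is a 2-parameter family. -/
theorem stmt_5 (l1 l2 l3 l4 m1 m2 m3 m4 : ℝ)
    (hl1 : 0 < l1) (hl2 : 0 < l2) (hl3 : 0 < l3) (hl4 : 0 < l4)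
    (hm1 : 0 < m1) (hm2 : 0 < m2) (hm3 : 0 < m3) (hm4 : 0 < m4)
    (A B C D Ab Bb Cb Db : ℝ → ℝ)
    (hApos : ∀ t ∈ Set.Ici (0:ℝ), 0 < A t) (hBpos : ∀ t ∈ Set.Ici (0:ℝ), 0 < B t)
    (hCpos : ∀ t ∈ Set.Ici (0:ℝ), 0 < C t) (hDpos : ∀ t ∈ Set.Ici (0:ℝ), 0 < D t)
    (hAbpos : ∀ t ∈ Set.Ici (0:ℝ), 0 < Ab t) (hBbpos : ∀ t ∈ Set.Ici (0:ℝ), 0 < Bb t)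
    (hCbpos : ∀ t ∈ Set.Ici (0:ℝ), 0 < Cb t) (hDbpos : ∀ t ∈ Set.Ici (0:ℝ), 0 < Db t)
    (hA : ∀ t ∈ Set.Ici (0:ℝ), HasDerivWithinAt A (B t / D t) (Set.Ici 0) t)
    (hB : ∀ t ∈ Set.Ici (0:ℝ),
      HasDerivWithinAt B (-(B t) ^ 2 / (A t * D t)) (Set.Ici 0) t)
    (hC : ∀ t ∈ Set.Ici (0:ℝ), HasDerivWithinAt C 0 (Set.Ici 0) t)
    (hD : ∀ t ∈ Set.Ici (0:ℝ), HasDerivWithinAt D (3 + B t / A t) (Set.Ici 0) t)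
    (hA0 : A 0 = l1) (hB0 : B 0 = l2) (hC0 : C 0 = l3) (hD0 : D 0 = l4)
    (hAB : ∀ t ∈ Set.Ici (0:ℝ), A t * B t = l1 * l2)
    (hAlim : Filter.Tendsto A Filter.atTop Filter.atTop)
    (hDlim : Filter.Tendsto D Filter.atTop Filter.atTop)
    (hAb : ∀ t ∈ Set.Ici (0:ℝ), HasDerivWithinAt Ab (Bb t / Db t) (Set.Ici 0) t)
    (hBb : ∀ t ∈ Set.Ici (0:ℝ),
      HasDerivWithinAt Bb (-(Bb t) ^ 2 / (Ab t * Db t)) (Set.Ici 0) t)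
    (hCb : ∀ t ∈ Set.Ici (0:ℝ), HasDerivWithinAt Cb 0 (Set.Ici 0) t)
    (hDb : ∀ t ∈ Set.Ici (0:ℝ), HasDerivWithinAt Db (3 + Bb t / Ab t) (Set.Ici 0) t)
    (hAb0 : Ab 0 = m1) (hBb0 : Bb 0 = m2) (hCb0 : Cb 0 = m3) (hDb0 : Db 0 = m4)
    (hAbB : ∀ t ∈ Set.Ici (0:ℝ), Ab t * Bb t = m1 * m2)
    (hAblim : Filter.Tendsto Ab Filter.atTop Filter.atTop)
    (hDblim : Filter.Tendsto Db Filter.atTop Filter.atTop) :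
    Filter.Tendsto (fun t : ℝ =>
        ((A t - Ab t) / A t) ^ 2 + ((B t - Bb t) / B t) ^ 2 +
        ((C t - Cb t) / C t) ^ 2 + ((D t - Db t) / D t) ^ 2)
      Filter.atTop (nhds 0) ↔ (m1 * m2 = l1 * l2 ∧ m3 = l3) :=
  stmt_5_general l1 l2 l3 m1 m2 m3 hl1 hl2 hl3 A B C D Ab Bb Cb Db hA hC hD hC0 hAB hAlim hDlim hAb
    hCb hDb hCb0 hAbB hAblim hDblim
end

section
/- Let λ₁,λ₂,λ₃,λ₄ and λ̄₁,λ̄₂,λ̄₃,λ̄₄ be positive reals, set E₀ = λ₂/(λ₁λ₄), F₀ = λ₃/(λ₂λ₄), Ē₀ = λ̄₂/(λ̄₁λ̄₄), F̄₀ = λ̄₃/(λ̄₂λ̄₄), and let a,b,c,d,e be real numbers. For t ≥ 0 define A(t)=λ₁(3E₀t+1)^{1/3}, B(t)=λ₂(3E₀t+1)^{-1/3}(3F₀t+1)^{1/3}, C(t)=λ₃(3F₀t+1)^{-1/3}, D(t)=λ₄(3E₀t+1)^{1/3}(3F₀t+1)^{1/3}, and define Ā,B̄,C̄,D̄ by the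 same formulas with λ̄ᵢ, Ē₀, F̄₀. Then the quantity ((A-Ā-a²B̄-e²C̄)/A)² + ((B-B̄-a²C̄)/B)² + ((C-C̄)/C)² + ((b²Ā+c²B̄+d²C̄+D̄-D)/D)² + 2(aB̄+aeC̄)²/(AB) + 2(eC̄)²/(AC) + 2(bĀ+acB̄+deC̄)²/(AD) + 2(aC̄)²/(BC) + 2(cB̄+adC̄)²/(BD) + 2(dC̄)²/(CD) tends to 0 as t → ∞ if and only if (λ̄₁/λ₁)(Ē₀/E₀)^{1/3} = 1, (λ̄₂/λ₂)(E₀/Ē₀)^{1/3}(F̄₀/F₀)^{1/3} = 1, (λ̄₃/λ₃)(F₀/F̄₀)^{1/3} = 1, and (λ̄₄/λ₄)(Ē₀/E₀)^{1/3}(F̄₀/F₀)^{1/3} = 1, for every choice of a,b,c,d,e; in particular the quasi-convergence class [g] is exactly a 2-parameter family. -/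
/-!
Along the flow, `A = λ₁ u`, `B = λ₂ v / u`, `C = λ₃ / v`, `D = λ₄ u v` with
`u = (3 E₀ t + 1)^(1/3)`, `v = (3 F₀ t + 1)^(1/3)`, and likewise for `ḡ`. Each summand of
`|ḡ - g|²_g` is a polynomial in the ratios of components of `ḡ` to components of `g`. Since
`(3 p t + 1)^(1/3) / (3 q t + 1)^(1/3) → (p / q)^(1/3)`, the four diagonal ratios `Ā / A, …, D̄ / D`
converge to the four displayed constants `κᵢ`, while every other ratio carries a net negative power
of `t` and vanishes. So `|ḡ - g|²_g → Σ (1 - κᵢ)²`, whatever `a, …, e` are, and this limit is zero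
iff every `κᵢ = 1`.
-/

open Filter Topology Real

/-- `|ḡ - g|²_g` for `g = diag(A, B, C, D)` in the frame `α` and `ḡ = diag(Ab, Bb, Cb, Db)` in the
frame `β`, computed from the components `ḡ_α = P ḡ_β Pᵀ`, where `P` is the transition matrix. -/
noncomputable def frameDistSq (a b c d e A B C D Ab Bb Cb Db : ℝ) : ℝ :=
  ((A - Ab - a ^ 2 * Bb - e ^ 2 * Cb) / A) ^ 2 +
  ((B - Bb - a ^ 2 * Cb) / B) ^ 2 +
  ((C - Cb) / C) ^ 2 +
  ((b ^ 2 * Ab + c ^ 2 * Bb + d ^ 2 * Cb + Db - D) / D) ^ 2 +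
  2 * (a * Bb + a * e * Cb) ^ 2 / (A * B) +
  2 * (e * Cb) ^ 2 / (A * C) +
  2 * (b * Ab + a * c * Bb + d * e * Cb) ^ 2 / (A * D) +
  2 * (a * Cb) ^ 2 / (B * C) +
  2 * (c * Bb + a * d * Cb) ^ 2 / (B * D) +
  2 * (d * Cb) ^ 2 / (C * D)

theorem tendsto_frameDistSq {α : Type*} {l : Filter α} (a b c d e : ℝ)
    {A B C D Ab Bb Cb Db : α → ℝ} {κ₁ κ₂ κ₃ κ₄ : ℝ}
    (hA : ∀ᶠ t in l, A t ≠ 0) (hB : ∀ᶠ t in l, B t ≠ 0)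
    (hC : ∀ᶠ t in l, C t ≠ 0) (hD : ∀ᶠ t in l, D t ≠ 0)
    (h₁ : Tendsto (fun t => Ab t / A t) l (𝓝 κ₁)) (h₂ : Tendsto (fun t => Bb t / B t) l (𝓝 κ₂))
    (h₃ : Tendsto (fun t => Cb t / C t) l (𝓝 κ₃)) (h₄ : Tendsto (fun t => Db t / D t) l (𝓝 κ₄))
    (hBA : Tendsto (fun t => Bb t / A t) l (𝓝 0)) (hCA : Tendsto (fun t => Cb t / A t) l (𝓝 0))
    (hCB : Tendsto (fun t => Cb t / B t) l (𝓝 0)) (hAD : Tendsto (fun t => Ab t / D t) l (𝓝 0))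
    (hBD : Tendsto (fun t => Bb t / D t) l (𝓝 0)) (hCD : Tendsto (fun t => Cb t / D t) l (𝓝 0)) :
    Tendsto (fun t => frameDistSq a b c d e (A t) (B t) (C t) (D t) (Ab t) (Bb t) (Cb t) (Db t)) l
      (𝓝 ((1 - κ₁) ^ 2 + (1 - κ₂) ^ 2 + (1 - κ₃) ^ 2 + (κ₄ - 1) ^ 2)) := by
  have T₁ := (((tendsto_const_nhds (x := (1 : ℝ))).sub h₁).sub (hBA.const_mul (a ^ 2))).sub
    (hCA.const_mul (e ^ 2)) |>.pow 2
  have T₂ := (((tendsto_const_nhds (x := (1 : ℝ))).sub h₂).sub (hCB.const_mul (a ^ 2))).pow 2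
  have T₃ := ((tendsto_const_nhds (x := (1 : ℝ))).sub h₃).pow 2
  have T₄ := (((((hAD.const_mul (b ^ 2)).add (hBD.const_mul (c ^ 2))).add
    (hCD.const_mul (d ^ 2))).add h₄).sub (tendsto_const_nhds (x := (1 : ℝ)))).pow 2
  have T₅ := ((hBA.add (hCA.const_mul e)).mul (h₂.add (hCB.const_mul e))).const_mul (2 * a ^ 2)
  have T₆ := (hCA.mul h₃).const_mul (2 * e ^ 2)
  have T₇ := ((((h₁.const_mul b).add (hBA.const_mul (a * c))).add (hCA.const_mul (d * e))).mul
    (((hAD.const_mul b).add (hBD.const_mul (a * c))).add (hCD.const_mul (d * e)))).const_mul 2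
  have T₈ := (hCB.mul h₃).const_mul (2 * a ^ 2)
  have T₉ := (((h₂.const_mul c).add (hCB.const_mul (a * d))).mul
    ((hBD.const_mul c).add (hCD.const_mul (a * d)))).const_mul 2
  have T₁₀ := (h₃.mul hCD).const_mul (2 * d ^ 2)
  refine ((T₁.add T₂ |>.add T₃ |>.add T₄ |>.add T₅ |>.add T₆ |>.add T₇ |>.add T₈ |>.add T₉
    |>.add T₁₀).congr' ?_).mono_right (le_of_eq (by congr 1; ring))
  filter_upwards [hA, hB, hC, hD] with t hA hB hC hD
  unfold frameDistSq
  field_simp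

theorem tendsto_affine_atTop {p : ℝ} (hp : 0 < p) (c : ℝ) :
    Tendsto (fun t : ℝ => p * t + c) atTop atTop :=
  tendsto_atTop_add_const_right _ c (tendsto_id.const_mul_atTop hp)

theorem tendsto_affine_rpow_div_affine_rpow {p q : ℝ} (hp : 0 < p) (hq : 0 < q) (c c' r : ℝ) :
    Tendsto (fun t : ℝ => (p * t + c) ^ r / (q * t + c') ^ r) atTop (𝓝 ((p / q) ^ r)) := by
  have hlin : ∀ x k : ℝ, Tendsto (fun t : ℝ => x + k * t⁻¹) atTop (𝓝 x) := fun x k => by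
    simpa using (tendsto_inv_atTop_zero.const_mul k).const_add x
  have hquot : Tendsto (fun t : ℝ => (p + c * t⁻¹) / (q + c' * t⁻¹)) atTop (𝓝 (p / q)) :=
    (hlin p c).div (hlin q c') hq.ne'
  refine ((continuousAt_rpow_const _ r (.inl (div_pos hp hq).ne')).tendsto.comp hquot).congr' ?_
  filter_upwards [eventually_gt_atTop 0, (tendsto_affine_atTop hp c).eventually_ge_atTop 0,
    (tendsto_affine_atTop hq c').eventually_ge_atTop 0] with t ht hpt hqt
  rw [Function.comp_apply, ← div_rpow hpt hqt]
  congr 1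
  field_simp

theorem tendsto_inv_affine_rpow {p : ℝ} (hp : 0 < p) (c : ℝ) {r : ℝ} (hr : 0 < r) :
    Tendsto (fun t : ℝ => ((p * t + c) ^ r)⁻¹) atTop (𝓝 0) :=
  tendsto_inv_atTop_zero.comp ((tendsto_rpow_atTop hr).comp (tendsto_affine_atTop hp c))

noncomputable def flowFactor (p t : ℝ) : ℝ := (3 * p * t + 1) ^ ((1 : ℝ) / 3)

theorem flowFactor_pos {p t : ℝ} (hp : 0 ≤ p) (ht : 0 ≤ t) : 0 < flowFactor p t :=
  rpow_pos_of_pos (by positivity) _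

theorem inv_flowFactor {p t : ℝ} (hp : 0 ≤ p) (ht : 0 ≤ t) :
    (flowFactor p t)⁻¹ = (3 * p * t + 1) ^ (-(1 : ℝ) / 3) := by
  rw [flowFactor, neg_div, rpow_neg (by positivity)]

theorem tendsto_flowFactor_div_flowFactor {p q : ℝ} (hp : 0 < p) (hq : 0 < q) :
    Tendsto (fun t => flowFactor p t / flowFactor q t) atTop (𝓝 ((p / q) ^ ((1 : ℝ) / 3))) := by
  have h := tendsto_affine_rpow_div_affine_rpow (by positivity : 0 < 3 * p)
    (by positivity : 0 < 3 * q) 1 1 ((1 : ℝ) / 3)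
  rwa [mul_div_mul_left p q three_ne_zero] at h

theorem tendsto_inv_flowFactor {p : ℝ} (hp : 0 < p) :
    Tendsto (fun t => (flowFactor p t)⁻¹) atTop (𝓝 0) :=
  tendsto_inv_affine_rpow (by positivity : 0 < 3 * p) 1 (by norm_num)

theorem tendsto_frameDistSq_flowFactor (a b c d e : ℝ) {l1 l2 l3 l4 : ℝ} (m1 m2 m3 m4 : ℝ)
    (hl1 : l1 ≠ 0) (hl2 : l2 ≠ 0) (hl3 : l3 ≠ 0) (hl4 : l4 ≠ 0)
    {E F Eb Fb : ℝ} (hE : 0 < E) (hF : 0 < F) (hEb : 0 < Eb) (hFb : 0 < Fb) :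
    Tendsto (fun t => frameDistSq a b c d e
        (l1 * flowFactor E t) (l2 * (flowFactor E t)⁻¹ * flowFactor F t)
        (l3 * (flowFactor F t)⁻¹) (l4 * flowFactor E t * flowFactor F t)
        (m1 * flowFactor Eb t) (m2 * (flowFactor Eb t)⁻¹ * flowFactor Fb t)
        (m3 * (flowFactor Fb t)⁻¹) (m4 * flowFactor Eb t * flowFactor Fb t)) atTop
      (𝓝 ((1 - m1 / l1 * (Eb / E) ^ ((1 : ℝ) / 3)) ^ 2 +
        (1 - m2 / l2 * (E / Eb) ^ ((1 : ℝ) / 3) * (Fb / F) ^ ((1 : ℝ) / 3)) ^ 2 +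
        (1 - m3 / l3 * (F / Fb) ^ ((1 : ℝ) / 3)) ^ 2 +
        (m4 / l4 * (Eb / E) ^ ((1 : ℝ) / 3) * (Fb / F) ^ ((1 : ℝ) / 3) - 1) ^ 2)) := by
  have hpos : ∀ᶠ t in atTop, 0 < flowFactor E t ∧ 0 < flowFactor F t := by
    filter_upwards [eventually_ge_atTop 0] with t ht
    exact ⟨flowFactor_pos hE.le ht, flowFactor_pos hF.le ht⟩
  have hratio := fun {p q : ℝ} (hp : 0 < p) (hq : 0 < q) => tendsto_flowFactor_div_flowFactor hp hq
  have hdecay := fun {p : ℝ} (hp : 0 < p) => tendsto_inv_flowFactor hp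
  refine tendsto_frameDistSq a b c d e ?_ ?_ ?_ ?_ ?_ ?_ ?_ ?_ ?_ ?_ ?_ ?_ ?_ ?_
  any_goals exact hpos.mono fun t ⟨hu, hv⟩ => by simp [hl1, hl2, hl3, hl4, hu.ne', hv.ne']
  · exact ((hratio hEb hE).const_mul (m1 / l1)).congr fun t => by ring
  · exact (((hratio hE hEb).const_mul (m2 / l2)).mul (hratio hFb hF)).congr fun t => by
      simp only [div_eq_mul_inv, mul_inv, inv_inv]; ring
  · exact ((hratio hF hFb).const_mul (m3 / l3)).congr fun t => by
      simp only [div_eq_mul_inv, mul_inv, inv_inv]; ring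
  · exact (((hratio hEb hE).const_mul (m4 / l4)).mul (hratio hFb hF)).congr fun t => by ring
  · simpa only [mul_zero] using
      (((hratio hFb hEb).const_mul (m2 / l1)).mul (hdecay hE)).congr fun t => by ring
  · simpa only [mul_zero] using
      (((hdecay hFb).const_mul (m3 / l1)).mul (hdecay hE)).congr fun t => by ring
  · simpa only [mul_zero] using
      (((hratio hE hFb).const_mul (m3 / l2)).mul (hdecay hF)).congr fun t => by
        simp only [div_eq_mul_inv, mul_inv, inv_inv]; ring
  · simpa only [mul_zero] using
      (((hratio hEb hE).const_mul (m1 / l4)).mul (hdecay hF)).congr fun t => by ring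
  · simpa only [mul_zero] using
      ((((hratio hFb hF).const_mul (m2 / l4)).mul (hdecay hEb)).mul (hdecay hE)).congr fun t => by
        ring
  · simpa only [mul_zero] using
      ((((hdecay hFb).const_mul (m3 / l4)).mul (hdecay hE)).mul (hdecay hF)).congr fun t => by ring

theorem sq_add_sq_add_sq_add_sq_eq_zero_iff {x y z w : ℝ} :
    x ^ 2 + y ^ 2 + z ^ 2 + w ^ 2 = 0 ↔ x = 0 ∧ y = 0 ∧ z = 0 ∧ w = 0 := by
  refine ⟨fun h => ?_, fun ⟨hx, hy, hz, hw⟩ => by simp [hx, hy, hz, hw]⟩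
  refine ⟨?_, ?_, ?_, ?_⟩ <;> refine pow_eq_zero_iff two_ne_zero |>.mp ?_ <;>
    linarith [sq_nonneg x, sq_nonneg y, sq_nonneg z, sq_nonneg w]

/-- class A6, different frames: quasi-convergence holds iff the
four displayed relations among the initial data hold, for every choice of
`a,b,c,d,e`; `[g]` is a 2-parameter family. -/
theorem stmt_8 (l1 l2 l3 l4 m1 m2 m3 m4 a b c d e : ℝ)
    (hl1 : 0 < l1) (hl2 : 0 < l2) (hl3 : 0 < l3) (hl4 : 0 < l4)
    (hm1 : 0 < m1) (hm2 : 0 < m2) (hm3 : 0 < m3) (hm4 : 0 < m4)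
    (E0 F0 Eb0 Fb0 : ℝ)
    (hE0 : E0 = l2 / (l1 * l4)) (hF0 : F0 = l3 / (l2 * l4))
    (hEb0 : Eb0 = m2 / (m1 * m4)) (hFb0 : Fb0 = m3 / (m2 * m4))
    (A B C D Ab Bb Cb Db : ℝ → ℝ)
    (hA : ∀ t : ℝ, A t = l1 * (3 * E0 * t + 1) ^ ((1:ℝ)/3))
    (hB : ∀ t : ℝ, B t = l2 * (3 * E0 * t + 1) ^ (-(1:ℝ)/3) * (3 * F0 * t + 1) ^ ((1:ℝ)/3))
    (hC : ∀ t : ℝ, C t = l3 * (3 * F0 * t + 1) ^ (-(1:ℝ)/3))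
    (hD : ∀ t : ℝ, D t = l4 * (3 * E0 * t + 1) ^ ((1:ℝ)/3) * (3 * F0 * t + 1) ^ ((1:ℝ)/3))
    (hAb : ∀ t : ℝ, Ab t = m1 * (3 * Eb0 * t + 1) ^ ((1:ℝ)/3))
    (hBb : ∀ t : ℝ, Bb t = m2 * (3 * Eb0 * t + 1) ^ (-(1:ℝ)/3) * (3 * Fb0 * t + 1) ^ ((1:ℝ)/3))
    (hCb : ∀ t : ℝ, Cb t = m3 * (3 * Fb0 * t + 1) ^ (-(1:ℝ)/3))
    (hDb : ∀ t : ℝ, Db t = m4 * (3 * Eb0 * t + 1) ^ ((1:ℝ)/3) * (3 * Fb0 * t + 1) ^ ((1:ℝ)/3)) :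
    Filter.Tendsto (fun t : ℝ =>
        ((A t - Ab t - a ^ 2 * Bb t - e ^ 2 * Cb t) / A t) ^ 2 +
        ((B t - Bb t - a ^ 2 * Cb t) / B t) ^ 2 +
        ((C t - Cb t) / C t) ^ 2 +
        ((b ^ 2 * Ab t + c ^ 2 * Bb t + d ^ 2 * Cb t + Db t - D t) / D t) ^ 2 +
        2 * (a * Bb t + a * e * Cb t) ^ 2 / (A t * B t) +
        2 * (e * Cb t) ^ 2 / (A t * C t) +
        2 * (b * Ab t + a * c * Bb t + d * e * Cb t) ^ 2 / (A t * D t) +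
        2 * (a * Cb t) ^ 2 / (B t * C t) +
        2 * (c * Bb t + a * d * Cb t) ^ 2 / (B t * D t) +
        2 * (d * Cb t) ^ 2 / (C t * D t))
      Filter.atTop (nhds 0) ↔
      ((m1 / l1) * (Eb0 / E0) ^ ((1:ℝ)/3) = 1 ∧
       (m2 / l2) * (E0 / Eb0) ^ ((1:ℝ)/3) * (Fb0 / F0) ^ ((1:ℝ)/3) = 1 ∧
       (m3 / l3) * (F0 / Fb0) ^ ((1:ℝ)/3) = 1 ∧
       (m4 / l4) * (Eb0 / E0) ^ ((1:ℝ)/3) * (Fb0 / F0) ^ ((1:ℝ)/3) = 1) := by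
  have hE : 0 < E0 := by rw [hE0]; positivity
  have hF : 0 < F0 := by rw [hF0]; positivity
  have hEb : 0 < Eb0 := by rw [hEb0]; positivity
  have hFb : 0 < Fb0 := by rw [hFb0]; positivity
  have hflow : (fun t => frameDistSq a b c d e (A t) (B t) (C t) (D t) (Ab t) (Bb t) (Cb t) (Db t))
      =ᶠ[atTop] fun t => frameDistSq a b c d e
        (l1 * flowFactor E0 t) (l2 * (flowFactor E0 t)⁻¹ * flowFactor F0 t)
        (l3 * (flowFactor F0 t)⁻¹) (l4 * flowFactor E0 t * flowFactor F0 t)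
        (m1 * flowFactor Eb0 t) (m2 * (flowFactor Eb0 t)⁻¹ * flowFactor Fb0 t)
        (m3 * (flowFactor Fb0 t)⁻¹) (m4 * flowFactor Eb0 t * flowFactor Fb0 t) := by
    filter_upwards [eventually_ge_atTop 0] with t ht
    simp only [inv_flowFactor hE.le ht, inv_flowFactor hF.le ht, inv_flowFactor hEb.le ht,
      inv_flowFactor hFb.le ht, hA, hB, hC, hD, hAb, hBb, hCb, hDb]
    rfl
  have hlim := (tendsto_frameDistSq_flowFactor a b c d e m1 m2 m3 m4 hl1.ne' hl2.ne' hl3.ne'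
    hl4.ne' hE hF hEb hFb).congr' hflow.symm
  refine ⟨fun h => ?_, fun ⟨h1, h2, h3, h4⟩ => ?_⟩
  · obtain ⟨h1, h2, h3, h4⟩ :=
      sq_add_sq_add_sq_add_sq_eq_zero_iff.mp (tendsto_nhds_unique hlim h)
    exact ⟨by linarith, by linarith, by linarith, by linarith⟩
  · rw [h1, h2, h3, h4] at hlim
    norm_num at hlim
    exact hlim
end

section
/- Let λ₁,λ₂,λ₃,λ₄ and λ̄₁,λ̄₂,λ̄₃,λ̄₄ be positive reals. Suppose A,B,C,D : [0,∞) → (0,∞) are differentiable and satisfy dA/dt = B/C + C/B + 2, dB/dt = C/A + D/C - B²/(AC), dC/dt = B/A + D/B - C²/(AB), dD/dt = -D²/(BC) with A(0)=λ₁, B(0)=λ₂, C(0)=λ₃, D(0)=λ₄, and suppose (as holds for these solutions) that A(t)/t → 4, B(t)/C(t) → 1 and B(t) → ∞ as t → ∞. Let Ā,B̄,C̄,D̄ satisfy the same ODE system with initial data λ̄₁,λ̄₂,λ̄₃,λ̄₄ and the same asymptotic properties. Then ((A-Ā)/A)² + ((B-B̄)/B)² + ((C-C̄)/C)² + ((D-D̄)/D)²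 tends to 0 as t → ∞ if and only if λ̄₂λ̄₃λ̄₄² = λ₂λ₃λ₄²; in particular λ̄₁, λ̄₂, λ̄₄ may be chosen arbitrarily, so the quasi-convergence class [g]_α is exactly a 3-parameter family. -/
/-!
Along the flow `B C D²` is conserved, so `(D⁻³)' = 3 / (B C D²)` is constant and `D⁻³` is affine
in `t` with slope `3 / κ`, `κ = λ₂λ₃λ₄²`. Hence `(D̄ / D)³ → κ̄ / κ`, and by the conservation law
`B̄ C̄ / (B C) = (κ̄ / κ) (D / D̄)² → (κ̄ / κ)^{1/3}`; as `B ~ C` and `B̄ ~ C̄`, both `B̄ / B` and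
`C̄ / C` tend to `(κ̄ / κ)^{1/6}`, while `Ā / A → 1` since both grow like `4 t`. The quasi-distance
therefore tends to `2 (1 - (κ̄ / κ)^{1/6})² + (1 - (κ̄ / κ)^{1/3})²`, which vanishes iff `κ̄ = κ`.
-/

open Filter Set Topology

theorem apply_eq_apply_zero_of_hasDerivWithinAt_zero {f : ℝ → ℝ}
    (hf : ∀ t ∈ Ici (0:ℝ), HasDerivWithinAt f 0 (Ici 0) t) {t : ℝ} (ht : 0 ≤ t) :
    f t = f 0 :=
  constant_of_has_deriv_right_zero
    (fun x hx => (hf x hx.1).continuousWithinAt.mono Icc_subset_Ici_self)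
    (fun x hx => (hf x hx.1).mono (Ici_subset_Ici.mpr hx.1)) t (right_mem_Icc.mpr ht)

theorem inv_pow_three_eq_of_hasDerivWithinAt {D : ℝ → ℝ} {k : ℝ}
    (hD0 : ∀ t ∈ Ici (0:ℝ), D t ≠ 0)
    (hD : ∀ t ∈ Ici (0:ℝ), HasDerivWithinAt D (-D t ^ 4 / k) (Ici 0) t) {t : ℝ} (ht : 0 ≤ t) :
    (D t ^ 3)⁻¹ = (D 0 ^ 3)⁻¹ + 3 / k * t := by
  have h := apply_eq_apply_zero_of_hasDerivWithinAt_zero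
    (f := fun t => (D t ^ 3)⁻¹ - 3 / k * t) (fun t ht => ?_) ht
  · simp only [mul_zero, sub_zero] at h
    linarith
  refine (((hD t ht).pow 3).inv (pow_ne_zero _ (hD0 t ht))).sub
    ((hasDerivWithinAt_id t _).const_mul _) |>.congr_deriv ?_
  have := hD0 t ht
  simp only [Pi.pow_apply]
  field_simp
  ring

theorem tendsto_affine_div_affine (a b c : ℝ) {d : ℝ} (hd : d ≠ 0) :
    Tendsto (fun t : ℝ => (a + b * t) / (c + d * t)) atTop (𝓝 (b / d)) := by
  have h : Tendsto (fun t : ℝ => (a / t + b) / (c / t + d)) atTop (𝓝 ((0 + b) / (0 + d))) :=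
    ((tendsto_const_nhds.div_atTop tendsto_id).add tendsto_const_nhds).div
      ((tendsto_const_nhds.div_atTop tendsto_id).add tendsto_const_nhds) (by simpa using hd)
  rw [zero_add, zero_add] at h
  refine h.congr' ?_
  filter_upwards [eventually_ne_atTop 0] with t ht
  rw [div_add' _ _ _ ht, div_add' _ _ _ ht, div_div_div_cancel_right₀ ht]

theorem tendsto_rpow_inv_of_tendsto_pow {α : Type*} {l : Filter α} {f : α → ℝ} {L : ℝ} {n : ℕ}
    (hn : n ≠ 0) (hf : ∀ᶠ x in l, 0 ≤ f x) (h : Tendsto (fun x => f x ^ n) l (𝓝 L)) :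
    Tendsto f l (𝓝 (L ^ (n⁻¹ : ℝ))) := by
  refine (h.rpow_const (Or.inr (by positivity))).congr' ?_
  filter_upwards [hf] with x hx
  exact Real.pow_rpow_inv_natCast hx hn

theorem tendsto_sub_div_sq {α : Type*} {l : Filter α} {f g : α → ℝ} {r : ℝ}
    (h : Tendsto (fun x => g x / f x) l (𝓝 r)) (hf : ∀ᶠ x in l, f x ≠ 0) :
    Tendsto (fun x => ((f x - g x) / f x) ^ 2) l (𝓝 ((1 - r) ^ 2)) := by
  refine ((tendsto_const_nhds.sub h).pow 2).congr' ?_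
  filter_upwards [hf] with x hx
  rw [sub_div, div_self hx]

theorem tendsto_div_of_tendsto_mul_div_mul {α : Type*} {l : Filter α} {B C Bb Cb : α → ℝ}
    {s : ℝ} (hpos : ∀ᶠ x in l, 0 < B x ∧ 0 < C x ∧ 0 < Bb x ∧ 0 < Cb x)
    (hprod : Tendsto (fun x => Bb x * Cb x / (B x * C x)) l (𝓝 s))
    (hBC : Tendsto (fun x => B x / C x) l (𝓝 1)) (hBbCb : Tendsto (fun x => Bb x / Cb x) l (𝓝 1)) :
    Tendsto (fun x => Bb x / B x) l (𝓝 (s ^ (2⁻¹ : ℝ))) ∧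
      Tendsto (fun x => Cb x / C x) l (𝓝 (s ^ (2⁻¹ : ℝ))) := by
  have hB : Tendsto (fun x => Bb x * Cb x / (B x * C x) * (Bb x / Cb x) / (B x / C x)) l
      (𝓝 (s * 1 / 1)) := (hprod.mul hBbCb).div hBC one_ne_zero
  have hC : Tendsto (fun x => Bb x * Cb x / (B x * C x) * (B x / C x) / (Bb x / Cb x)) l
      (𝓝 (s * 1 / 1)) := (hprod.mul hBC).div hBbCb one_ne_zero
  rw [mul_one, div_one] at hB hC
  refine ⟨tendsto_rpow_inv_of_tendsto_pow two_ne_zero ?_ (hB.congr' ?_),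
    tendsto_rpow_inv_of_tendsto_pow two_ne_zero ?_ (hC.congr' ?_)⟩
  all_goals filter_upwards [hpos] with x ⟨hBx, hCx, hBbx, hCbx⟩
  all_goals first | positivity | field_simp

/-- The `B`, `C`, `D` equations of the A7i Ricci flow on `[0, ∞)`, with `A` left free. -/
structure A7iBCDFlow (A B C D : ℝ → ℝ) : Prop where
  B_pos : ∀ t ∈ Ici (0:ℝ), 0 < B t
  C_pos : ∀ t ∈ Ici (0:ℝ), 0 < C t
  D_pos : ∀ t ∈ Ici (0:ℝ), 0 < D t
  hasDerivWithinAt_B : ∀ t ∈ Ici (0:ℝ),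
    HasDerivWithinAt B (C t / A t + D t / C t - B t ^ 2 / (A t * C t)) (Ici 0) t
  hasDerivWithinAt_C : ∀ t ∈ Ici (0:ℝ),
    HasDerivWithinAt C (B t / A t + D t / B t - C t ^ 2 / (A t * B t)) (Ici 0) t
  hasDerivWithinAt_D : ∀ t ∈ Ici (0:ℝ), HasDerivWithinAt D (-D t ^ 2 / (B t * C t)) (Ici 0) t

namespace A7iBCDFlow

variable {A B C D Ab Bb Cb Db : ℝ → ℝ}

theorem mul_mul_sq_eq (h : A7iBCDFlow A B C D) {t : ℝ} (ht : 0 ≤ t) :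
    B t * C t * D t ^ 2 = B 0 * C 0 * D 0 ^ 2 := by
  refine apply_eq_apply_zero_of_hasDerivWithinAt_zero (f := fun t => B t * C t * D t ^ 2)
    (fun t ht => ?_) ht
  refine ((h.hasDerivWithinAt_B t ht).mul (h.hasDerivWithinAt_C t ht)).mul
    ((h.hasDerivWithinAt_D t ht).pow 2) |>.congr_deriv ?_
  have := (h.B_pos t ht).ne'
  have := (h.C_pos t ht).ne'
  simp only [Pi.mul_apply, Pi.pow_apply]
  field_simp
  ring

theorem mul_mul_sq_pos (h : A7iBCDFlow A B C D) : 0 < B 0 * C 0 * D 0 ^ 2 := by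
  have := h.B_pos 0 self_mem_Ici
  have := h.C_pos 0 self_mem_Ici
  have := h.D_pos 0 self_mem_Ici
  positivity

theorem inv_pow_three_eq (h : A7iBCDFlow A B C D) {t : ℝ} (ht : 0 ≤ t) :
    (D t ^ 3)⁻¹ = (D 0 ^ 3)⁻¹ + 3 / (B 0 * C 0 * D 0 ^ 2) * t := by
  refine inv_pow_three_eq_of_hasDerivWithinAt (fun t ht => (h.D_pos t ht).ne')
    (fun t ht => (h.hasDerivWithinAt_D t ht).congr_deriv ?_) ht
  have := (h.D_pos t ht).ne'
  rw [← h.mul_mul_sq_eq ht]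
  field_simp

theorem tendsto_div_D (h : A7iBCDFlow A B C D) (hb : A7iBCDFlow Ab Bb Cb Db) :
    Tendsto (fun t => Db t / D t) atTop
      (𝓝 ((Bb 0 * Cb 0 * Db 0 ^ 2 / (B 0 * C 0 * D 0 ^ 2)) ^ (3⁻¹ : ℝ))) := by
  have hcube := tendsto_affine_div_affine (D 0 ^ 3)⁻¹ (3 / (B 0 * C 0 * D 0 ^ 2))
    (Db 0 ^ 3)⁻¹ (div_ne_zero three_ne_zero hb.mul_mul_sq_pos.ne')
  rw [div_div_div_cancel_left' _ _ three_ne_zero] at hcube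
  refine tendsto_rpow_inv_of_tendsto_pow three_ne_zero ?_ (hcube.congr' ?_)
  all_goals filter_upwards [eventually_ge_atTop 0] with t ht
  · exact div_nonneg (hb.D_pos t ht).le (h.D_pos t ht).le
  · rw [← h.inv_pow_three_eq ht, ← hb.inv_pow_three_eq ht, inv_div_inv, div_pow]

theorem exists_tendsto_div (h : A7iBCDFlow A B C D) (hb : A7iBCDFlow Ab Bb Cb Db)
    (hBC : Tendsto (fun t => B t / C t) atTop (𝓝 1))
    (hBbCb : Tendsto (fun t => Bb t / Cb t) atTop (𝓝 1)) :
    ∃ s > 0, s ^ 3 = Bb 0 * Cb 0 * Db 0 ^ 2 / (B 0 * C 0 * D 0 ^ 2) ∧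
      Tendsto (fun t => Bb t / B t) atTop (𝓝 (s ^ (2⁻¹ : ℝ))) ∧
      Tendsto (fun t => Cb t / C t) atTop (𝓝 (s ^ (2⁻¹ : ℝ))) ∧
      Tendsto (fun t => Db t / D t) atTop (𝓝 s) := by
  set r := Bb 0 * Cb 0 * Db 0 ^ 2 / (B 0 * C 0 * D 0 ^ 2)
  have hr : 0 < r := div_pos hb.mul_mul_sq_pos h.mul_mul_sq_pos
  have hs : 0 < r ^ (3⁻¹ : ℝ) := Real.rpow_pos_of_pos hr _
  have hs3 : (r ^ (3⁻¹ : ℝ)) ^ 3 = r := Real.rpow_inv_natCast_pow hr.le three_ne_zero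
  have hD := h.tendsto_div_D hb
  have hprod : Tendsto (fun t => Bb t * Cb t / (B t * C t)) atTop (𝓝 (r ^ (3⁻¹ : ℝ))) := by
    have hlim := tendsto_const_nhds (x := r) |>.mul ((hD.inv₀ hs.ne').pow 2)
    rw [show r * ((r ^ (3⁻¹ : ℝ))⁻¹) ^ 2 = r ^ (3⁻¹ : ℝ) by nth_rw 1 [← hs3]; field_simp] at hlim
    refine hlim.congr' ?_
    filter_upwards [eventually_ge_atTop 0] with t ht
    have := (h.B_pos t ht).ne'
    have := (h.C_pos t ht).ne'
    have := (h.D_pos t ht).ne'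
    have := (hb.D_pos t ht).ne'
    simp only [r, ← h.mul_mul_sq_eq ht, ← hb.mul_mul_sq_eq ht]
    field_simp
  have hpos : ∀ᶠ t in atTop, 0 < B t ∧ 0 < C t ∧ 0 < Bb t ∧ 0 < Cb t := by
    filter_upwards [eventually_ge_atTop 0] with t ht
    exact ⟨h.B_pos t ht, h.C_pos t ht, hb.B_pos t ht, hb.C_pos t ht⟩
  obtain ⟨hBrat, hCrat⟩ := tendsto_div_of_tendsto_mul_div_mul hpos hprod hBC hBbCb
  exact ⟨_, hs, hs3, hBrat, hCrat, hD⟩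

end A7iBCDFlow

theorem stmt_9_general (l2 l3 l4 m2 m3 m4 : ℝ)
    (A B C D Ab Bb Cb Db : ℝ → ℝ)
    (hApos : ∀ t ∈ Set.Ici (0:ℝ), 0 < A t) (hBpos : ∀ t ∈ Set.Ici (0:ℝ), 0 < B t)
    (hCpos : ∀ t ∈ Set.Ici (0:ℝ), 0 < C t) (hDpos : ∀ t ∈ Set.Ici (0:ℝ), 0 < D t)
    (hBbpos : ∀ t ∈ Set.Ici (0:ℝ), 0 < Bb t)
    (hCbpos : ∀ t ∈ Set.Ici (0:ℝ), 0 < Cb t) (hDbpos : ∀ t ∈ Set.Ici (0:ℝ), 0 < Db t)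
    (hB : ∀ t ∈ Set.Ici (0:ℝ),
      HasDerivWithinAt B (C t / A t + D t / C t - (B t) ^ 2 / (A t * C t)) (Set.Ici 0) t)
    (hC : ∀ t ∈ Set.Ici (0:ℝ),
      HasDerivWithinAt C (B t / A t + D t / B t - (C t) ^ 2 / (A t * B t)) (Set.Ici 0) t)
    (hD : ∀ t ∈ Set.Ici (0:ℝ),
      HasDerivWithinAt D (-(D t) ^ 2 / (B t * C t)) (Set.Ici 0) t)
    (hB0 : B 0 = l2) (hC0 : C 0 = l3) (hD0 : D 0 = l4)
    (hAlim : Filter.Tendsto (fun t => A t / t) Filter.atTop (nhds 4))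
    (hBClim : Filter.Tendsto (fun t => B t / C t) Filter.atTop (nhds 1))
    (hBb : ∀ t ∈ Set.Ici (0:ℝ),
      HasDerivWithinAt Bb (Cb t / Ab t + Db t / Cb t - (Bb t) ^ 2 / (Ab t * Cb t)) (Set.Ici 0) t)
    (hCb : ∀ t ∈ Set.Ici (0:ℝ),
      HasDerivWithinAt Cb (Bb t / Ab t + Db t / Bb t - (Cb t) ^ 2 / (Ab t * Bb t)) (Set.Ici 0) t)
    (hDb : ∀ t ∈ Set.Ici (0:ℝ),
      HasDerivWithinAt Db (-(Db t) ^ 2 / (Bb t * Cb t)) (Set.Ici 0) t)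
    (hBb0 : Bb 0 = m2) (hCb0 : Cb 0 = m3) (hDb0 : Db 0 = m4)
    (hAblim : Filter.Tendsto (fun t => Ab t / t) Filter.atTop (nhds 4))
    (hBbClim : Filter.Tendsto (fun t => Bb t / Cb t) Filter.atTop (nhds 1)) :
    Filter.Tendsto (fun t : ℝ =>
        ((A t - Ab t) / A t) ^ 2 + ((B t - Bb t) / B t) ^ 2 +
        ((C t - Cb t) / C t) ^ 2 + ((D t - Db t) / D t) ^ 2)
      Filter.atTop (nhds 0) ↔ m2 * m3 * m4 ^ 2 = l2 * l3 * l4 ^ 2 := by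
  have hg : A7iBCDFlow A B C D := ⟨hBpos, hCpos, hDpos, hB, hC, hD⟩
  have hgb : A7iBCDFlow Ab Bb Cb Db := ⟨hBbpos, hCbpos, hDbpos, hBb, hCb, hDb⟩
  obtain ⟨s, hs, hs3, hBrat, hCrat, hDrat⟩ := hg.exists_tendsto_div hgb hBClim hBbClim
  have hArat : Tendsto (fun t => Ab t / A t) atTop (𝓝 1) := by
    refine (div_self (four_ne_zero' ℝ) ▸ hAblim.div hAlim four_ne_zero).congr' ?_
    filter_upwards [eventually_ne_atTop 0] with t ht
    exact div_div_div_cancel_right₀ ht _ _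
  have hne {f : ℝ → ℝ} (hf : ∀ t ∈ Ici (0:ℝ), 0 < f t) : ∀ᶠ t in atTop, f t ≠ 0 :=
    (eventually_ge_atTop 0).mono fun t ht => (hf t ht).ne'
  have hlim := (((tendsto_sub_div_sq hArat (hne hApos)).add
    (tendsto_sub_div_sq hBrat (hne hBpos))).add (tendsto_sub_div_sq hCrat (hne hCpos))).add
    (tendsto_sub_div_sq hDrat (hne hDpos))
  have hL : (1 - 1) ^ 2 + (1 - s ^ (2⁻¹ : ℝ)) ^ 2 + (1 - s ^ (2⁻¹ : ℝ)) ^ 2 + (1 - s) ^ 2 = 0 ↔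
      s = 1 := by
    refine ⟨fun h => ?_, fun h => by simp [h]⟩
    nlinarith [sq_nonneg (1 - s ^ (2⁻¹ : ℝ)), sq_nonneg (1 - s)]
  rw [← hB0, ← hC0, ← hD0, ← hBb0, ← hCb0, ← hDb0, ← div_eq_one_iff_eq hg.mul_mul_sq_pos.ne',
    ← hs3, pow_eq_one_iff_of_nonneg hs.le three_ne_zero, ← hL]
  exact ⟨fun h0 => tendsto_nhds_unique hlim h0, fun h => h ▸ hlim⟩

/-- class A7i: for solutions of the A7i Ricci-flow ODE system,
quasi-convergence in the same frame holds iff `λ̄₂λ̄₃λ̄₄² = λ₂λ₃λ₄²`;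
`[g]_α` is a 3-parameter family. -/
theorem stmt_9 (l1 l2 l3 l4 m1 m2 m3 m4 : ℝ)
    (hl1 : 0 < l1) (hl2 : 0 < l2) (hl3 : 0 < l3) (hl4 : 0 < l4)
    (hm1 : 0 < m1) (hm2 : 0 < m2) (hm3 : 0 < m3) (hm4 : 0 < m4)
    (A B C D Ab Bb Cb Db : ℝ → ℝ)
    (hApos : ∀ t ∈ Set.Ici (0:ℝ), 0 < A t) (hBpos : ∀ t ∈ Set.Ici (0:ℝ), 0 < B t)
    (hCpos : ∀ t ∈ Set.Ici (0:ℝ), 0 < C t) (hDpos : ∀ t ∈ Set.Ici (0:ℝ), 0 < D t)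
    (hAbpos : ∀ t ∈ Set.Ici (0:ℝ), 0 < Ab t) (hBbpos : ∀ t ∈ Set.Ici (0:ℝ), 0 < Bb t)
    (hCbpos : ∀ t ∈ Set.Ici (0:ℝ), 0 < Cb t) (hDbpos : ∀ t ∈ Set.Ici (0:ℝ), 0 < Db t)
    (hA : ∀ t ∈ Set.Ici (0:ℝ),
      HasDerivWithinAt A (B t / C t + C t / B t + 2) (Set.Ici 0) t)
    (hB : ∀ t ∈ Set.Ici (0:ℝ),
      HasDerivWithinAt B (C t / A t + D t / C t - (B t) ^ 2 / (A t * C t)) (Set.Ici 0) t)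
    (hC : ∀ t ∈ Set.Ici (0:ℝ),
      HasDerivWithinAt C (B t / A t + D t / B t - (C t) ^ 2 / (A t * B t)) (Set.Ici 0) t)
    (hD : ∀ t ∈ Set.Ici (0:ℝ),
      HasDerivWithinAt D (-(D t) ^ 2 / (B t * C t)) (Set.Ici 0) t)
    (hA0 : A 0 = l1) (hB0 : B 0 = l2) (hC0 : C 0 = l3) (hD0 : D 0 = l4)
    (hAlim : Filter.Tendsto (fun t => A t / t) Filter.atTop (nhds 4))
    (hBClim : Filter.Tendsto (fun t => B t / C t) Filter.atTop (nhds 1))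
    (hBlim : Filter.Tendsto B Filter.atTop Filter.atTop)
    (hAb : ∀ t ∈ Set.Ici (0:ℝ),
      HasDerivWithinAt Ab (Bb t / Cb t + Cb t / Bb t + 2) (Set.Ici 0) t)
    (hBb : ∀ t ∈ Set.Ici (0:ℝ),
      HasDerivWithinAt Bb (Cb t / Ab t + Db t / Cb t - (Bb t) ^ 2 / (Ab t * Cb t)) (Set.Ici 0) t)
    (hCb : ∀ t ∈ Set.Ici (0:ℝ),
      HasDerivWithinAt Cb (Bb t / Ab t + Db t / Bb t - (Cb t) ^ 2 / (Ab t * Bb t)) (Set.Ici 0) t)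
    (hDb : ∀ t ∈ Set.Ici (0:ℝ),
      HasDerivWithinAt Db (-(Db t) ^ 2 / (Bb t * Cb t)) (Set.Ici 0) t)
    (hAb0 : Ab 0 = m1) (hBb0 : Bb 0 = m2) (hCb0 : Cb 0 = m3) (hDb0 : Db 0 = m4)
    (hAblim : Filter.Tendsto (fun t => Ab t / t) Filter.atTop (nhds 4))
    (hBbClim : Filter.Tendsto (fun t => Bb t / Cb t) Filter.atTop (nhds 1))
    (hBblim : Filter.Tendsto Bb Filter.atTop Filter.atTop) :
    Filter.Tendsto (fun t : ℝ =>
        ((A t - Ab t) / A t) ^ 2 + ((B t - Bb t) / B t) ^ 2 +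
        ((C t - Cb t) / C t) ^ 2 + ((D t - Db t) / D t) ^ 2)
      Filter.atTop (nhds 0) ↔ m2 * m3 * m4 ^ 2 = l2 * l3 * l4 ^ 2 :=
  stmt_9_general l2 l3 l4 m2 m3 m4 A B C D Ab Bb Cb Db hApos hBpos hCpos hDpos hBbpos hCbpos hDbpos
    hB hC hD hB0 hC0 hD0 hAlim hBClim hBb hCb hDb hBb0 hCb0 hDb0 hAblim hBbClim
end
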